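/- With the setup of the preceding statement (single-channel all-ones input, spatially constant), applying ReLU to the convolution output yields a spatially constant output ReLU(S + bias) where S = ∑_{a,b'} w c0 a b'. Consequently, the NASGraph edge score ω = ∑_{d1 ≤ H, d2 ≤ W} ReLU(S + bias) = H * W * max (S + bias) 0, and ω = 0 if and only if S + bias ≤ 0. -/
import Mathlib


theorem stmt_12 (C fk1 fk2 H W : ℕ) (hH : 0 < H) (hW : 0 < W)
    (w : Fin C → Fin fk1 → Fin fk2 → ℝ) (bias : ℝ)
    (x : Fin C → ℤ → ℤ → ℝ) (c0 : Fin C)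
    (hx1 : ∀ p q, x c0 p q = 1)
    (hx0 : ∀ c, c ≠ c0 → ∀ p q, x c p q = 0)
    (s : ℤ)
    (S : ℝ) (hS : S = ∑ a : Fin fk1, ∑ b' : Fin fk2, w c0 a b')
    (g : ℤ → ℤ → ℝ)
    (hg : ∀ d1 d2, g d1 d2 =
      max ((∑ a : Fin fk1, ∑ b' : Fin fk2, ∑ c : Fin C,
        w c a b' * x c ((a : ℤ) + (d1 - 1) * s) ((b' : ℤ) + (d2 - 1) * s)) + bias) 0)
    (ω : ℝ) (hω : ω = ∑ d1 : Fin H, ∑ d2 : Fin W, g (d1 : ℤ) (d2 : ℤ)) :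
    (∀ d1 d2, g d1 d2 = max (S + bias) 0) ∧
    ω = (H : ℝ) * W * max (S + bias) 0 ∧
    (ω = 0 ↔ S + bias ≤ 0) := by
  have hgconst : ∀ d1 d2, g d1 d2 = max (S + bias) 0 := by
    intro d1 d2
    rw [hg, hS]
    congr 2
    apply Finset.sum_congr rfl; intro a _
    apply Finset.sum_congr rfl; intro b _
    rw [Finset.sum_eq_single c0]
    · rw [hx1]; ring
    · intro c _ hc; rw [hx0 c hc]; ring
    · intro h; simp at h
  have hωval : ω = (H : ℝ) * W * max (S + bias) 0 := by
    rw [hω]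
    simp only [hgconst]
    rw [Finset.sum_const, Finset.sum_const]
    simp [mul_assoc]
  refine ⟨hgconst, hωval, ?_⟩
  constructor
  · intro h
    rw [hωval] at h
    have hHW : (0:ℝ) < (H:ℝ) * W := by positivity
    have := mul_eq_zero.mp h
    rcases this with h' | h'
    · exact absurd h' (ne_of_gt hHW)
    · rcases max_eq_iff.mp h' with ⟨h1, _⟩ | ⟨_, h2⟩
      · exact le_of_eq h1
      · exact h2
  · intro h
    rw [hωval, max_eq_right h, mul_zero]
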